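/- Let σ, S = ℂ[σ], w : σ → ℤⁿ, w' : σ → ℕ, and hc' be as in the weighted-grading setup. Suppose J = (g_i)_{i ∈ Λ} is an ideal of S generated by a family of elements and J is homogeneous with respect to the ℤⁿ-grading, and set J' = (hc'(g_i))_{i ∈ Λ}. Then for every d ∈ ℤⁿ for which (S/J)_d is finite-dimensional, one has dim (S/J')_d ≥ dim (S/J)_d. -/

import Mathlib

/-! Let `V = S_d` and let `in(J)` be the `ℂ`-span of the top components `hc'(f)`, `f ∈ J`; it is
an ideal and contains `J'`. Since `J` is `w`-homogeneous, the elements of `in(J)` of `w`-weight `d`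
lie in the span of `hc'(J ∩ V)`. Lift a basis of `(S/J')_d` to `w'`-homogeneous elements `q_k ∈ V`;
then `V ⊆ span(q_k) + (J' ∩ V) ⊆ span(q_k) + span hc'(J ∩ V)`. Induction on the `w'`-weight,
writing `hc'(u) = u - (u - hc'(u))` with `u - hc'(u)` of lower weight, improves this to
`V = span(q_k) + (J ∩ V)`. So the images of the `q_k` span `(S/J)_d`. -/

open scoped BigOperators

/-- `hcomp' w' p` is the `w'`-homogeneous component of `p` of highest `w'`-weight;
for `p ≠ 0` this is the nonzero top weighted-homogeneous component `hc'(p)`. -/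
noncomputable def hcomp' {σ : Type*} (w' : σ → ℕ) (p : MvPolynomial σ ℂ) :
    MvPolynomial σ ℂ :=
  MvPolynomial.weightedHomogeneousComponent w' (MvPolynomial.weightedTotalDegree w' p) p

/-- The image in `S ⧸ J` of the space of `w`-homogeneous polynomials of weight `d`. -/
noncomputable def gradedPiece {σ : Type*} {n : ℕ} (w : σ → Fin n → ℤ)
    (J : Ideal (MvPolynomial σ ℂ)) (d : Fin n → ℤ) :
    Submodule ℂ (MvPolynomial σ ℂ ⧸ J) :=
  (MvPolynomial.weightedHomogeneousSubmodule ℂ w d).map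
    (Ideal.Quotient.mkₐ ℂ J).toLinearMap

universe u

open Finsupp (weight)

theorem Submodule.exists_subset_disjoint_ker_map_span_eq {K M N : Type*} [DivisionRing K]
    [AddCommGroup M] [Module K M] [AddCommGroup N] [Module K N] (f : M →ₗ[K] N) (T : Set M) :
    ∃ T' ⊆ T, Disjoint (span K T') (LinearMap.ker f) ∧ (span K T').map f = (span K T).map f := by
  obtain ⟨_, a, -, hspan, hli⟩ := exists_linearIndependent' K (f ∘ ((↑) : T → M))
  refine ⟨Set.range (Subtype.val ∘ a), by rintro _ ⟨k, rfl⟩; exact (a k).2,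
    range_ker_disjoint hli, ?_⟩
  rw [map_span, map_span, ← Set.range_comp, Set.image_eq_range]
  exact hspan

theorem Submodule.le_sup_ker_inf_of_map_le {K M N : Type*} [Ring K] [AddCommGroup M] [Module K M]
    [AddCommGroup N] [Module K N] (f : M →ₗ[K] N) {Q V : Submodule K M} (hQV : Q ≤ V)
    (h : V.map f ≤ Q.map f) : V ≤ Q ⊔ LinearMap.ker f ⊓ V :=
  calc V ≤ (Q ⊔ LinearMap.ker f) ⊓ V := le_inf ((LinearMap.map_le_map_iff f).mp h) le_rfl
    _ = Q ⊔ LinearMap.ker f ⊓ V := sup_inf_assoc_of_le _ hQV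

theorem Submodule.rank_map_eq_of_disjoint_ker {K : Type*} {M N : Type u} [Ring K] [AddCommGroup M]
    [Module K M] [AddCommGroup N] [Module K N] (f : M →ₗ[K] N) {Q : Submodule K M}
    (h : Disjoint Q (LinearMap.ker f)) : Module.rank K (Q.map f) = Module.rank K Q := by
  rw [← LinearMap.range_domRestrict]
  exact rank_range_of_injective _ (LinearMap.injective_domRestrict_iff.mpr h)

theorem Ideal.Quotient.ker_mkₐ_toLinearMap {R A : Type*} [CommSemiring R] [CommRing A]
    [Algebra R A] (I : Ideal A) :
    LinearMap.ker (Ideal.Quotient.mkₐ R I).toLinearMap = I.restrictScalars R := by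
  ext x
  simp [Ideal.Quotient.eq_zero_iff_mem]

namespace MvPolynomial

variable {σ R : Type*} [CommSemiring R]

noncomputable def weightedTrunc (w : σ → ℕ) (D : ℕ) : MvPolynomial σ R →ₗ[R] MvPolynomial σ R :=
  ∑ e ∈ Finset.range D, weightedHomogeneousComponent w e

theorem coeff_weightedTrunc (w : σ → ℕ) (D : ℕ) (m : σ →₀ ℕ) (p : MvPolynomial σ R) :
    coeff m (weightedTrunc w D p) = if weight w m < D then coeff m p else 0 := by
  classical
  simp [weightedTrunc, coeff_sum, coeff_weightedHomogeneousComponent]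

theorem weightedTrunc_eq_self {w : σ → ℕ} {D : ℕ} {p : MvPolynomial σ R}
    (hp : p ∈ restrictSupport R {m | weight w m < D}) : weightedTrunc w D p = p := by
  ext m
  rw [coeff_weightedTrunc, ite_eq_left_iff]
  intro hm
  by_contra h
  exact hm ((mem_restrictSupport_iff R).mp hp (mem_support_iff.mpr (Ne.symm h)))

theorem IsWeightedHomogeneous.weightedTrunc_eq {w : σ → ℕ} {p : MvPolynomial σ R} {e : ℕ}
    (hp : IsWeightedHomogeneous w p e) (D : ℕ) :
    weightedTrunc w D p = if e < D then p else 0 := by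
  ext m
  rw [coeff_weightedTrunc]
  by_cases hm : coeff m p = 0
  · split_ifs <;> simp [hm]
  · rw [hp hm]
    split_ifs <;> simp

theorem support_monomial_mul [NoZeroDivisors R] {s : σ →₀ ℕ} {a : R} (ha : a ≠ 0)
    (p : MvPolynomial σ R) : (monomial s a * p).support = p.support.map (addLeftEmbedding s) :=
  AddMonoidAlgebra.support_coeff_single_mul p a (by simp [ha]) s

theorem weightedTotalDegree_monomial_mul [NoZeroDivisors R] (w : σ → ℕ) {s : σ →₀ ℕ} {a : R}
    (ha : a ≠ 0) {p : MvPolynomial σ R} (hp : p ≠ 0) :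
    weightedTotalDegree w (monomial s a * p) = weight w s + weightedTotalDegree w p := by
  rw [weightedTotalDegree, weightedTotalDegree, support_monomial_mul ha, Finset.sup_map,
    Finset.add_sup (support_nonempty.mpr hp)]
  simp [Function.comp_def]

variable {M N : Type*} [AddCommMonoid M] [AddCommMonoid N]

theorem weightedHomogeneousComponent_monomial_mul [IsLeftCancelAdd M] (w : σ → M)
    (s : σ →₀ ℕ) (a : R) (e : M) (p : MvPolynomial σ R) :
    weightedHomogeneousComponent w (weight w s + e) (monomial s a * p) =
      monomial s a * weightedHomogeneousComponent w e p := by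
  classical
  ext m
  rw [coeff_weightedHomogeneousComponent, coeff_monomial_mul', coeff_monomial_mul']
  by_cases hs : s ≤ m
  · have hw : weight w m = weight w s + weight w (m - s) := by
      rw [← map_add, add_tsub_cancel_of_le hs]
    simp only [if_pos hs, coeff_weightedHomogeneousComponent, hw, add_right_inj, mul_ite,
      mul_zero]
  · simp only [if_neg hs, ite_self]

theorem weightedHomogeneousComponent_comm (w : σ → M) (v : σ → N) (a : M) (b : N)
    (p : MvPolynomial σ R) :
    weightedHomogeneousComponent w a (weightedHomogeneousComponent v b p) =
      weightedHomogeneousComponent v b (weightedHomogeneousComponent w a p) := by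
  classical
  ext m
  simp only [coeff_weightedHomogeneousComponent]
  split_ifs <;> rfl

theorem IsWeightedHomogeneous.weightedHomogeneousComponent {w : σ → M} {d : M}
    {p : MvPolynomial σ R} (hp : IsWeightedHomogeneous w p d) (v : σ → N) (e : N) :
    IsWeightedHomogeneous w (weightedHomogeneousComponent v e p) d := by
  rw [← hp.weightedHomogeneousComponent_same, weightedHomogeneousComponent_comm]
  exact weightedHomogeneousComponent_isWeightedHomogeneous d _

theorem weightedTotalDegree_weightedHomogeneousComponent_le (w : σ → ℕ) (v : σ → M) (e : M)
    (p : MvPolynomial σ R) :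
    weightedTotalDegree w (weightedHomogeneousComponent v e p) ≤ weightedTotalDegree w p := by
  classical
  refine Finset.sup_le fun m hm => le_weightedTotalDegree w ?_
  rw [support_weightedHomogeneousComponent] at hm
  exact (Finset.mem_filter.mp hm).1

theorem span_setOf_isWeightedHomogeneous (w : σ → M) {V : Submodule R (MvPolynomial σ R)}
    (hV : ∀ v ∈ V, ∀ e, weightedHomogeneousComponent w e v ∈ V) :
    Submodule.span R {v ∈ V | ∃ e, IsWeightedHomogeneous w v e} = V := by
  refine le_antisymm (Submodule.span_le.mpr fun v hv => hv.1) fun v hv => ?_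
  rw [← sum_weightedHomogeneousComponent w v,
    finsum_eq_sum _ (weightedHomogeneousComponent_finsupp v)]
  exact Submodule.sum_mem _ fun e _ => Submodule.subset_span
    ⟨hV v hv e, e, weightedHomogeneousComponent_isWeightedHomogeneous e v⟩

end MvPolynomial

open MvPolynomial Submodule

section

variable {σ : Type*}

theorem hcomp'_isWeightedHomogeneous (w' : σ → ℕ) (p : MvPolynomial σ ℂ) :
    IsWeightedHomogeneous w' (hcomp' w' p) (weightedTotalDegree w' p) :=
  weightedHomogeneousComponent_isWeightedHomogeneous _ _

theorem sub_hcomp'_mem_restrictSupport (w' : σ → ℕ) (p : MvPolynomial σ ℂ) :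
    p - hcomp' w' p ∈ restrictSupport ℂ {m | weight w' m < weightedTotalDegree w' p} := by
  classical
  rw [mem_restrictSupport_iff]
  intro m hm
  rw [Finset.mem_coe, mem_support_iff, coeff_sub, hcomp',
    coeff_weightedHomogeneousComponent] at hm
  split_ifs at hm with h
  · simp at hm
  · exact lt_of_le_of_ne (le_weightedTotalDegree w' (mem_support_iff.mpr (by simpa using hm))) h

theorem hcomp'_monomial_mul (w' : σ → ℕ) {s : σ →₀ ℕ} {a : ℂ} (ha : a ≠ 0)
    (p : MvPolynomial σ ℂ) : hcomp' w' (monomial s a * p) = monomial s a * hcomp' w' p := by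
  rcases eq_or_ne p 0 with rfl | hp
  · simp [hcomp']
  · rw [hcomp', hcomp', weightedTotalDegree_monomial_mul w' ha hp,
      weightedHomogeneousComponent_monomial_mul]

theorem monomial_mul_mem_span_image_hcomp' (w' : σ → ℕ) (J : Ideal (MvPolynomial σ ℂ))
    (s : σ →₀ ℕ) (a : ℂ) {x : MvPolynomial σ ℂ} (hx : x ∈ span ℂ (hcomp' w' '' J)) :
    monomial s a * x ∈ span ℂ (hcomp' w' '' J) := by
  rcases eq_or_ne a 0 with rfl | ha
  · simp
  induction hx using span_induction with
  | mem _ h =>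
    obtain ⟨f, hf, rfl⟩ := h
    exact subset_span ⟨_, J.mul_mem_left _ hf, hcomp'_monomial_mul w' ha f⟩
  | zero => simp
  | add _ _ _ _ hx hy => rw [mul_add]; exact add_mem hx hy
  | smul c _ _ hx => rw [mul_smul_comm]; exact smul_mem _ c hx

noncomputable def initialIdeal (w' : σ → ℕ) (J : Ideal (MvPolynomial σ ℂ)) :
    Ideal (MvPolynomial σ ℂ) where
  carrier := span ℂ (hcomp' w' '' J)
  add_mem' := add_mem
  zero_mem' := zero_mem _
  smul_mem' c x hx := by
    rw [smul_eq_mul, ← support_sum_monomial_coeff c, Finset.sum_mul]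
    exact sum_mem fun s _ => monomial_mul_mem_span_image_hcomp' w' J s _ hx

theorem span_range_hcomp'_le_initialIdeal (w' : σ → ℕ) {Λ : Type*} (g : Λ → MvPolynomial σ ℂ) :
    Ideal.span (Set.range fun i => hcomp' w' (g i)) ≤ initialIdeal w' (Ideal.span (Set.range g)) :=
  Ideal.span_le.mpr <| by
    rintro _ ⟨i, rfl⟩
    exact subset_span ⟨g i, Ideal.subset_span ⟨i, rfl⟩, rfl⟩

theorem initialIdeal_inf_weightedHomogeneousSubmodule_le {M : Type*} [AddCommMonoid M]
    (w : σ → M) (w' : σ → ℕ) (d : M) {J : Ideal (MvPolynomial σ ℂ)}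
    (hJ : ∀ p ∈ J, weightedHomogeneousComponent w d p ∈ J) :
    (initialIdeal w' J).restrictScalars ℂ ⊓ weightedHomogeneousSubmodule ℂ w d ≤
      span ℂ (hcomp' w' '' (J.restrictScalars ℂ ⊓ weightedHomogeneousSubmodule ℂ w d)) := by
  rintro q ⟨hq, hqd⟩
  rw [← IsWeightedHomogeneous.weightedHomogeneousComponent_same hqd]
  have hmem : weightedHomogeneousComponent w d q ∈
      span ℂ (weightedHomogeneousComponent w d '' (hcomp' w' '' J)) := by
    rw [← Submodule.map_span]
    exact mem_map_of_mem hq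
  refine span_le.mpr ?_ hmem
  rintro _ ⟨_, ⟨f, hf, rfl⟩, rfl⟩
  set h := weightedHomogeneousComponent w d f
  rw [hcomp', weightedHomogeneousComponent_comm]
  rcases (weightedTotalDegree_weightedHomogeneousComponent_le w' w d f).lt_or_eq with hlt | heq
  · rw [weightedHomogeneousComponent_eq_zero _ h hlt]
    exact zero_mem _
  · rw [← heq]
    exact subset_span ⟨h, ⟨hJ f hf, weightedHomogeneousComponent_mem w f d⟩, rfl⟩

theorem le_sup_of_le_sup_span_image_hcomp' (w' : σ → ℕ) {V U : Submodule ℂ (MvPolynomial σ ℂ)}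
    {T : Set (MvPolynomial σ ℂ)} (hT : ∀ t ∈ T, ∃ e, IsWeightedHomogeneous w' t e)
    (hUV : U ≤ V) (hU : ∀ u ∈ U, hcomp' w' u ∈ V)
    (h : V ≤ span ℂ T ⊔ span ℂ (hcomp' w' '' U)) : V ≤ span ℂ T ⊔ U := by
  suffices key : ∀ D, ∀ v ∈ V, v ∈ restrictSupport ℂ {m | weight w' m < D} → v ∈ span ℂ T ⊔ U
    from fun v hv => key _ v hv fun m hm => Nat.lt_succ_of_le (le_weightedTotalDegree w' hm)
  intro D
  induction D using Nat.strong_induction_on with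
  | _ D ih =>
  intro v hv hvD
  have hmap : (span ℂ T ⊔ span ℂ (hcomp' w' '' U)).map (weightedTrunc w' D) ≤ span ℂ T ⊔ U := by
    rw [Submodule.map_sup, Submodule.map_span, Submodule.map_span]
    refine sup_le (le_sup_of_le_left (span_le.mpr ?_)) (span_le.mpr ?_)
    · rintro _ ⟨t, ht, rfl⟩
      obtain ⟨e, he⟩ := hT t ht
      rw [he.weightedTrunc_eq]
      split_ifs
      · exact subset_span ht
      · exact zero_mem _
    · rintro _ ⟨_, ⟨u, hu, rfl⟩, rfl⟩
      rw [(hcomp'_isWeightedHomogeneous w' u).weightedTrunc_eq]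
      split_ifs with hlt
      · have hlow := ih _ hlt _ (V.sub_mem (hUV hu) (hU u hu)) (sub_hcomp'_mem_restrictSupport w' u)
        rw [← sub_sub_cancel u (hcomp' w' u)]
        exact sub_mem (mem_sup_right hu) hlow
      · exact zero_mem _
  rw [← weightedTrunc_eq_self hvD]
  exact hmap (mem_map_of_mem (h hv))

end

theorem dim_quotient_hc_generators_ge (σ : Type*) (n : ℕ) (w : σ → Fin n → ℤ)
    (w' : σ → ℕ) (Λ : Type*) (g : Λ → MvPolynomial σ ℂ)
    (hJ : ∀ p ∈ Ideal.span (Set.range g), ∀ d : Fin n → ℤ,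
      MvPolynomial.weightedHomogeneousComponent w d p ∈ Ideal.span (Set.range g))
    (d : Fin n → ℤ) :
    Module.rank ℂ (gradedPiece w (Ideal.span (Set.range g)) d) ≤
      Module.rank ℂ (gradedPiece w (Ideal.span (Set.range fun i => hcomp' w' (g i))) d) := by
  set J := Ideal.span (Set.range g)
  set J' := Ideal.span (Set.range fun i => hcomp' w' (g i))
  set V := weightedHomogeneousSubmodule ℂ w d
  set U := J.restrictScalars ℂ ⊓ V
  have hV : ∀ v ∈ V, ∀ e, weightedHomogeneousComponent w' e v ∈ V := fun v hv e =>
    IsWeightedHomogeneous.weightedHomogeneousComponent hv w' e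
  obtain ⟨T, hTV, hdisj, hmap⟩ := exists_subset_disjoint_ker_map_span_eq
    (Ideal.Quotient.mkₐ ℂ J').toLinearMap {v ∈ V | ∃ e, IsWeightedHomogeneous w' v e}
  rw [span_setOf_isWeightedHomogeneous w' hV] at hmap
  have hJ'V : J'.restrictScalars ℂ ⊓ V ≤ span ℂ (hcomp' w' '' U) :=
    (inf_le_inf_right V (restrictScalars_mono ℂ (span_range_hcomp'_le_initialIdeal w' g))).trans
      (initialIdeal_inf_weightedHomogeneousSubmodule_le w w' d fun p hp => hJ p hp d)
  have hVT : V ≤ span ℂ T ⊔ U := by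
    refine le_sup_of_le_sup_span_image_hcomp' w' (fun t ht => (hTV ht).2) inf_le_right
      (fun u hu => hV u hu.2 _) ((le_sup_ker_inf_of_map_le _ ?_ hmap.ge).trans ?_)
    · exact span_le.mpr fun t ht => (hTV ht).1
    · rw [Ideal.Quotient.ker_mkₐ_toLinearMap]
      exact sup_le_sup_left hJ'V _
  have hle : gradedPiece w J d ≤ (span ℂ T).map (Ideal.Quotient.mkₐ ℂ J).toLinearMap := by
    refine (LinearMap.map_le_map_iff _).mpr (hVT.trans (sup_le_sup_left ?_ _))
    rw [Ideal.Quotient.ker_mkₐ_toLinearMap]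
    exact inf_le_left
  calc Module.rank ℂ (gradedPiece w J d) ≤ Module.rank ℂ (span ℂ T) :=
        (rank_mono hle).trans (rank_map_le _ _)
    _ = Module.rank ℂ (gradedPiece w J' d) := by
        rw [← rank_map_eq_of_disjoint_ker _ hdisj, hmap]
        rfl
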